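/- Let (ν_j)_{j≥1} be i.i.d. real random variables with ℙ(ν_1 = 0) = 0 and 𝔼( |log(|ν_1|/2)| ) < ∞. Define the sequence (c_m)_{m≥1} by c_{2j−1} = ν_j and c_{2j} = −2 for j ≥ 1, and for m ≥ 2 the transfer matrices T_m = [[0, −c_{m−1}/c_m],[1, 0]] (these are the transfer matrices at energy E = 0 of the Jacobi matrix with zero diagonal and off-diagonal entries c_1, c_2, c_3, …, the one-particle operator of the Ising chain in random transversal field). Then almost surely lim_{N→∞} (1/N) log ‖ T_{N+1} T_N ⋯ T_2 ‖ = (1/2) | 𝔼( log(|ν_1|/2) ) |, i.e. the Lyapunov exponent at energy zero equals (1/2)|𝔼(log(|ν_1|/2))|. -/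

import Mathlib

/-!
At energy zero the transfer matrices are antidiagonal: `T_{2k+2} = [[0, ν_k/2], [1, 0]]` and
`T_{2k+3} = [[0, 2/ν_{k+1}], [1, 0]]` (with `ν` indexed from `0`). Hence `T_{N+1} ⋯ T_2` is
diagonal for even `N` and antidiagonal for odd `N`, its two nonzero entries being `∏ ν_j/2` and
`∏ 2/ν_{j+1}`, and its operator norm is the larger of their moduli. Writing
`S_n = ∑_{j<n} log(|ν_j|/2)`, the log-norm is `max(S_{⌈N/2⌉}, S_1 - S_{⌊N/2⌋+1})`. By the strong
law of large numbers the two arguments are `±(N/2) 𝔼 log(|ν_0|/2) + o(N)`, and the maximum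
selects the absolute value.
-/

open MeasureTheory ProbabilityTheory

noncomputable section

/-- operator norm of a matrix, viewed as an operator on Euclidean space -/
def opNorm {𝕜 : Type*} [RCLike 𝕜] {m : Type*} [Fintype m] [DecidableEq m]
    (M : Matrix m m 𝕜) : ℝ :=
  ‖(Matrix.toEuclideanLin M).toContinuousLinearMap‖

/-- The off-diagonal entries `c_1, c_2, c_3, … = ν_1, −2, ν_2, −2, …` of the one-particle
operator of the Ising chain; here `ν : ℕ → ℝ` is 0-based (`ν 0` is the paper's `ν_1`),
while `c` is 1-based as in the paper. -/
def isingOffdiag (ν : ℕ → ℝ) (m : ℕ) : ℝ :=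
  if m % 2 = 1 then ν ((m - 1) / 2) else -2

/-- the transfer matrices at energy `E = 0`: `T_m = [[0, −c_{m−1}/c_m],[1,0]]` for `m ≥ 2` -/
def isingTransfer (ν : ℕ → ℝ) (m : ℕ) : Matrix (Fin 2) (Fin 2) ℝ :=
  !![0, -(isingOffdiag ν (m - 1)) / isingOffdiag ν m; 1, 0]

end

open Filter Topology Finset
open scoped Matrix.Norms.L2Operator

section OpNormFinTwo

variable {𝕜 : Type*} [RCLike 𝕜]

lemma opNorm_eq_norm {n : Type*} [Fintype n] [DecidableEq n] (M : Matrix n n 𝕜) :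
    opNorm M = ‖M‖ := rfl

lemma norm_vec2 {E : Type*} [SeminormedAddCommGroup E] (a b : E) :
    ‖![a, b]‖ = max ‖a‖ ‖b‖ := by
  apply le_antisymm
  · refine (pi_norm_le_iff_of_nonneg (by positivity)).2 fun i => ?_
    fin_cases i <;> simp
  · exact max_le (by simpa using norm_le_pi_norm ![a, b] 0)
      (by simpa using norm_le_pi_norm ![a, b] 1)

lemma opNorm_diagonal_fin_two (a b : 𝕜) : opNorm !![a, 0; 0, b] = max ‖a‖ ‖b‖ := by
  rw [opNorm_eq_norm, ← norm_vec2, ← Matrix.l2_opNorm_diagonal, Matrix.diagonal_vec2]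

lemma swap_mem_unitary_fin_two : !![(0 : 𝕜), 1; 1, 0] ∈ unitary (Matrix (Fin 2) (Fin 2) 𝕜) := by
  have hstar : star !![(0 : 𝕜), 1; 1, 0] = !![0, 1; 1, 0] := by
    rw [Matrix.eta_fin_two (star _)]
    simp
  rw [Unitary.mem_iff, hstar, Matrix.mul_fin_two, Matrix.one_fin_two]
  simp

lemma opNorm_antidiagonal_fin_two (a b : 𝕜) : opNorm !![0, a; b, 0] = max ‖a‖ ‖b‖ := by
  have hswap : !![0, a; b, 0] = !![a, 0; 0, b] * !![(0 : 𝕜), 1; 1, 0] := by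
    rw [Matrix.mul_fin_two]
    simp
  rw [opNorm_eq_norm, hswap, CStarRing.norm_mul_mem_unitary _ (swap_mem_unitary_fin_two (𝕜 := 𝕜)),
    ← opNorm_eq_norm, opNorm_diagonal_fin_two]

end OpNormFinTwo

/-- `T_{N+1} * T_N * ⋯ * T_2` -/
noncomputable def isingTransferProd (ν : ℕ → ℝ) (N : ℕ) : Matrix (Fin 2) (Fin 2) ℝ :=
  ((List.range N).map (fun i => isingTransfer ν (N + 1 - i))).prod

lemma isingTransferProd_zero (ν : ℕ → ℝ) : isingTransferProd ν 0 = 1 := rfl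

lemma isingTransferProd_succ (ν : ℕ → ℝ) (N : ℕ) :
    isingTransferProd ν (N + 1) = isingTransfer ν (N + 2) * isingTransferProd ν N := by
  simp only [isingTransferProd, List.range_succ_eq_map, List.map_cons, List.map_map,
    List.prod_cons, Nat.sub_zero]
  congr 3
  funext i
  simp only [Function.comp_apply]
  congr 1
  omega

lemma isingTransfer_two_mul_add_two (ν : ℕ → ℝ) (k : ℕ) :
    isingTransfer ν (2 * k + 2) = !![0, ν k / 2; 1, 0] := by
  have hprev : (2 * k + 2 - 1) % 2 = 1 ∧ (2 * k + 2 - 1 - 1) / 2 = k := by omega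
  have hcur : (2 * k + 2) % 2 = 0 := by omega
  simp only [isingTransfer, isingOffdiag, hprev, hcur]
  norm_num

lemma isingTransfer_two_mul_add_three (ν : ℕ → ℝ) (k : ℕ) :
    isingTransfer ν (2 * k + 3) = !![0, 2 / ν (k + 1); 1, 0] := by
  have hprev : (2 * k + 3 - 1) % 2 = 0 := by omega
  have hcur : (2 * k + 3) % 2 = 1 ∧ (2 * k + 3 - 1) / 2 = k + 1 := by omega
  simp only [isingTransfer, isingOffdiag, hprev, hcur]
  norm_num

lemma isingTransferProd_two_mul (ν : ℕ → ℝ) (k : ℕ) :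
    isingTransferProd ν (2 * k) =
      !![∏ j ∈ range k, 2 / ν (j + 1), 0; 0, ∏ j ∈ range k, ν j / 2] := by
  induction k with
  | zero => simp [isingTransferProd_zero, Matrix.one_fin_two]
  | succ k ih =>
    rw [show 2 * (k + 1) = 2 * k + 1 + 1 by ring, isingTransferProd_succ,
      isingTransferProd_succ, ih, isingTransfer_two_mul_add_two,
      show 2 * k + 1 + 2 = 2 * k + 3 by ring, isingTransfer_two_mul_add_three,
      Matrix.mul_fin_two, Matrix.mul_fin_two, prod_range_succ, prod_range_succ]
    norm_num [mul_comm]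

lemma isingTransferProd_two_mul_add_one (ν : ℕ → ℝ) (k : ℕ) :
    isingTransferProd ν (2 * k + 1) =
      !![0, ∏ j ∈ range (k + 1), ν j / 2; ∏ j ∈ range k, 2 / ν (j + 1), 0] := by
  rw [isingTransferProd_succ, isingTransferProd_two_mul, isingTransfer_two_mul_add_two,
    Matrix.mul_fin_two, prod_range_succ]
  norm_num [mul_comm]

lemma log_abs_prod_div_two {x : ℕ → ℝ} (hx : ∀ j, x j ≠ 0) (k : ℕ) :
    Real.log |∏ j ∈ range k, x j / 2| = ∑ j ∈ range k, Real.log (|x j| / 2) := by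
  rw [abs_prod, Real.log_prod fun j _ => by simp [hx j]]
  simp_rw [abs_div, abs_two]

lemma log_abs_prod_two_div {x : ℕ → ℝ} (hx : ∀ j, x j ≠ 0) (k : ℕ) :
    Real.log |∏ j ∈ range k, 2 / x j| = -∑ j ∈ range k, Real.log (|x j| / 2) := by
  simp_rw [← inv_div (x _), prod_inv_distrib, abs_inv, Real.log_inv, log_abs_prod_div_two hx]

lemma log_max_abs {a b : ℝ} (ha : a ≠ 0) (hb : b ≠ 0) :
    Real.log (max |a| |b|) = max (Real.log |a|) (Real.log |b|) :=
  Real.strictMonoOn_log.monotoneOn.map_max (abs_pos.2 ha) (abs_pos.2 hb)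

lemma log_opNorm_isingTransferProd {ν : ℕ → ℝ} (hν : ∀ j, ν j ≠ 0) (n : ℕ) :
    Real.log (opNorm (isingTransferProd ν n)) =
      max (∑ j ∈ range ((n + 1) / 2), Real.log (|ν j| / 2))
        (-∑ j ∈ range (n / 2), Real.log (|ν (j + 1)| / 2)) := by
  have hprod_ne {x : ℕ → ℝ} (hx : ∀ j, x j ≠ 0) (k : ℕ) : ∏ j ∈ range k, x j ≠ 0 :=
    prod_ne_zero_iff.2 fun j _ => hx j
  have hup : ∀ j, ν (j + 1) ≠ 0 := fun j => hν (j + 1)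
  obtain ⟨k, rfl | rfl⟩ := Nat.even_or_odd' n
  · rw [isingTransferProd_two_mul, opNorm_diagonal_fin_two, Real.norm_eq_abs, Real.norm_eq_abs,
      log_max_abs, max_comm, log_abs_prod_div_two hν, log_abs_prod_two_div hup,
      show (2 * k + 1) / 2 = k by omega, show 2 * k / 2 = k by omega]
    · exact hprod_ne (fun j => div_ne_zero two_ne_zero (hup j)) k
    · exact hprod_ne (fun j => div_ne_zero (hν j) two_ne_zero) k
  · rw [isingTransferProd_two_mul_add_one, opNorm_antidiagonal_fin_two, Real.norm_eq_abs,
      Real.norm_eq_abs, log_max_abs, log_abs_prod_div_two hν, log_abs_prod_two_div hup,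
      show (2 * k + 1 + 1) / 2 = k + 1 by omega, show (2 * k + 1) / 2 = k by omega]
    · exact hprod_ne (fun j => div_ne_zero (hν j) two_ne_zero) (k + 1)
    · exact hprod_ne (fun j => div_ne_zero two_ne_zero (hup j)) k

lemma tendsto_div_natCast_of_abs_sub_le {φ : ℕ → ℝ} {c C : ℝ} (h : ∀ n, |φ n - c * n| ≤ C) :
    Tendsto (fun n : ℕ => φ n / n) atTop (𝓝 c) := by
  have hdev : Tendsto (fun n : ℕ => (φ n - c * n) / n) atTop (𝓝 0) := by
    refine squeeze_zero_norm (fun n => ?_) (tendsto_const_div_atTop_nhds_zero_nat C)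
    rw [norm_div, Real.norm_natCast]
    exact div_le_div_of_nonneg_right (h n) n.cast_nonneg
  have hlim := hdev.const_add c
  rw [add_zero] at hlim
  refine hlim.congr' ?_
  filter_upwards [eventually_ne_atTop 0] with n hn
  field_simp
  ring

lemma tendsto_inv_mul_comp_of_abs_sub_le {u : ℕ → ℝ} {L : ℝ}
    (hu : Tendsto (fun n : ℕ => (n : ℝ)⁻¹ * u n) atTop (𝓝 L)) {φ : ℕ → ℕ} {c C : ℝ}
    (hc : 0 < c) (hφ : ∀ n, |(φ n : ℝ) - c * n| ≤ C) :
    Tendsto (fun n : ℕ => (n : ℝ)⁻¹ * u (φ n)) atTop (𝓝 (c * L)) := by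
  have hφ_atTop : Tendsto φ atTop atTop := by
    rw [← tendsto_natCast_atTop_iff (R := ℝ)]
    refine tendsto_atTop_mono (fun n => ?_)
      ((tendsto_natCast_atTop_atTop.const_mul_atTop hc).atTop_add tendsto_const_nhds (C := -C))
    linarith [(abs_le.1 (hφ n)).1]
  refine ((tendsto_div_natCast_of_abs_sub_le hφ).mul (hu.comp hφ_atTop)).congr' ?_
  filter_upwards [eventually_ne_atTop 0, hφ_atTop.eventually_ne_atTop 0] with n hn hφn
  simp only [Function.comp_apply]
  field_simp

lemma abs_natCast_add_div_two_sub_le (a n : ℕ) :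
    |(((n + a) / 2 : ℕ) : ℝ) - 1 / 2 * n| ≤ a + 1 := by
  have hlo : n ≤ 2 * ((n + a) / 2) + 1 := by omega
  have hhi : 2 * ((n + a) / 2) ≤ n + a := by omega
  have hlo' : (n : ℝ) ≤ 2 * ((n + a) / 2 : ℕ) + 1 := by exact_mod_cast hlo
  have hhi' : 2 * (((n + a) / 2 : ℕ) : ℝ) ≤ n + a := by exact_mod_cast hhi
  rw [abs_le]
  constructor <;> linarith

lemma tendsto_inv_mul_max_sum_half {x : ℕ → ℝ} {L : ℝ}
    (h : Tendsto (fun n : ℕ => (n : ℝ)⁻¹ * ∑ i ∈ range n, x i) atTop (𝓝 L)) :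
    Tendsto (fun n : ℕ => (n : ℝ)⁻¹ *
        max (∑ i ∈ range ((n + 1) / 2), x i) (-∑ i ∈ range (n / 2), x (i + 1)))
      atTop (𝓝 (1 / 2 * |L|)) := by
  have hfirst := tendsto_inv_mul_comp_of_abs_sub_le h one_half_pos
    (abs_natCast_add_div_two_sub_le 1)
  have hsecond := tendsto_inv_mul_comp_of_abs_sub_le h one_half_pos
    (abs_natCast_add_div_two_sub_le 2)
  have hx0 : Tendsto (fun n : ℕ => (n : ℝ)⁻¹ * x 0) atTop (𝓝 0) := by
    simpa using tendsto_inv_atTop_nhds_zero_nat.mul_const (x 0)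
  have hlim := hfirst.max (hx0.sub hsecond)
  rw [zero_sub, ← abs_eq_max_neg, abs_mul, abs_of_pos one_half_pos] at hlim
  refine hlim.congr fun n => ?_
  rw [mul_max_of_nonneg _ _ (inv_nonneg.2 n.cast_nonneg), show (n + 2) / 2 = n / 2 + 1 by omega,
    sum_range_succ']
  congr 1
  ring

section IID

variable {Ω α : Type*} [MeasurableSpace Ω] [MeasurableSpace α] {P : Measure Ω} {ν : ℕ → Ω → α}

lemma ae_tendsto_inv_mul_sum_comp (hindep : Pairwise fun i j => IndepFun (ν i) (ν j) P)
    (hident : ∀ i, IdentDistrib (ν i) (ν 0) P P) {f : α → ℝ} (hf : Measurable f)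
    (hint : Integrable (fun ω => f (ν 0 ω)) P) :
    ∀ᵐ ω ∂P, Tendsto (fun n : ℕ => (n : ℝ)⁻¹ * ∑ i ∈ range n, f (ν i ω)) atTop
      (𝓝 (∫ ω, f (ν 0 ω) ∂P)) :=
  strong_law_ae (fun i ω => f (ν i ω)) hint (fun _ _ hij => (hindep hij).comp hf hf)
    fun i => (hident i).comp hf

lemma ae_forall_ne_of_identDistrib [MeasurableSingletonClass α]
    (hident : ∀ i, IdentDistrib (ν i) (ν 0) P P) {a : α} (ha : P {ω | ν 0 ω = a} = 0) :
    ∀ᵐ ω ∂P, ∀ j, ν j ω ≠ a := by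
  refine ae_all_iff.2 fun j => measure_eq_zero_iff_ae_notMem.1 ?_
  rw [← ha]
  exact (hident j).measure_mem_eq (measurableSet_singleton a)

end IID

theorem ising_lyapunov_exponent_at_zero_general
    {Ω : Type*} [MeasurableSpace Ω] (P : MeasureTheory.Measure Ω)
    (ν : ℕ → Ω → ℝ)
    (hνindep : ProbabilityTheory.iIndepFun ν P)
    (hνident : ∀ i j, ProbabilityTheory.IdentDistrib (ν i) (ν j) P P)
    (hνne : P {ω | ν 0 ω = 0} = 0)
    (hint : MeasureTheory.Integrable (fun ω => Real.log (|ν 0 ω| / 2)) P) :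
    ∀ᵐ ω ∂P, Filter.Tendsto
      (fun N : ℕ => ((N : ℝ))⁻¹ * Real.log (opNorm
        (((List.range N).map (fun i => isingTransfer (fun j => ν j ω) (N + 1 - i))).prod)))
      Filter.atTop
      (nhds ((1 / 2) * |∫ ω', Real.log (|ν 0 ω'| / 2) ∂P|)) := by
  have hlog : Measurable fun x : ℝ => Real.log (|x| / 2) := by fun_prop
  filter_upwards [ae_tendsto_inv_mul_sum_comp (fun _ _ => hνindep.indepFun)
      (fun i => hνident i 0) hlog hint,
    ae_forall_ne_of_identDistrib (fun i => hνident i 0) hνne] with ω hslln hne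
  refine (tendsto_inv_mul_max_sum_half hslln).congr fun N => ?_
  rw [← log_opNorm_isingTransferProd hne]
  rfl

/-- For the Ising chain in an i.i.d. random transversal field with
`ℙ(ν_1 = 0) = 0` and `𝔼|log(|ν_1|/2)| < ∞`, the Lyapunov exponent at energy zero is
`γ(0) = (1/2)|𝔼(log(|ν_1|/2))|`. -/
theorem ising_lyapunov_exponent_at_zero
    {Ω : Type*} [MeasurableSpace Ω] (P : MeasureTheory.Measure Ω)
    [MeasureTheory.IsProbabilityMeasure P]
    (ν : ℕ → Ω → ℝ) (hνmeas : ∀ j, Measurable (ν j))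
    (hνindep : ProbabilityTheory.iIndepFun ν P)
    (hνident : ∀ i j, ProbabilityTheory.IdentDistrib (ν i) (ν j) P P)
    (hνne : P {ω | ν 0 ω = 0} = 0)
    (hint : MeasureTheory.Integrable (fun ω => Real.log (|ν 0 ω| / 2)) P) :
    ∀ᵐ ω ∂P, Filter.Tendsto
      (fun N : ℕ => ((N : ℝ))⁻¹ * Real.log (opNorm
        (((List.range N).map (fun i => isingTransfer (fun j => ν j ω) (N + 1 - i))).prod)))
      Filter.atTop
      (nhds ((1 / 2) * |∫ ω', Real.log (|ν 0 ω'| / 2) ∂P|)) :=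
  ising_lyapunov_exponent_at_zero_general P ν hνindep hνident hνne hint
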